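/- Let w ∈ ℝ^s (s ≥ 3) with all w_i ≠ 0, let α ∈ ℝ^s with all α_i ≠ 0, and suppose ⟨α, w⟩ = ⟨α, w*w⟩ = 0 and Σ_{i=1}^s α_i ≠ 0. Then for all sufficiently small ε ≠ 0, the vector v = w + (ε, ..., ε, ε, ε') with ε' = -ε(Σ_{i=1}^{s-1} α_i)/α_s satisfies ⟨α, v⟩ = 0, sign(v) = sign(w), and ⟨α, v*v⟩ = (ε Σ_{i=1}^s α_i / α_s)(ε Σ_{i=1}^{s-1} α_i - 2 w_s α_s) ≠ 0. -/
import Mathlib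

open Finset

lemma sign_add_of_abs_lt' {x δ : ℝ} (hx : x ≠ 0) (h : |δ| < |x|) :
    Real.sign (x + δ) = Real.sign x := by
  have h2 := abs_lt.mp h
  rcases hx.lt_or_gt with hneg | hpos
  · rw [abs_of_neg hneg] at h2
    rw [Real.sign_of_neg hneg, Real.sign_of_neg (by linarith)]
  · rw [abs_of_pos hpos] at h2
    rw [Real.sign_of_pos hpos, Real.sign_of_pos (by linarith)]

open Finset in
/-- The `Γ_s ≠ 0` case of the perturbation argument in the square lemma:
if `⟨α,w⟩ = ⟨α,w*w⟩ = 0`, `∑ αᵢ ≠ 0`, and all coordinates of `w, α` are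
nonzero, then for all sufficiently small `ε ≠ 0` the perturbed vector
`v = w + (ε,…,ε,ε')` with `ε' = -ε Γ_{s-1}/α_s` satisfies `⟨α,v⟩ = 0`,
`sign(v) = sign(w)`, and
`⟨α,v*v⟩ = (ε Γ_s/α_s)(ε Γ_{s-1} - 2 w_s α_s) ≠ 0`. -/
theorem square_lemma_perturbation (s : ℕ) (hs : 3 ≤ s)
    (w α : Fin s → ℝ) (hw : ∀ i, w i ≠ 0) (hα : ∀ i, α i ≠ 0)
    (horth : ∑ i, α i * w i = 0) (horth2 : ∑ i, α i * (w i) ^ 2 = 0)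
    (hΓ : ∑ i, α i ≠ 0) :
    ∃ ε₀ : ℝ, 0 < ε₀ ∧ ∀ ε : ℝ, ε ≠ 0 → |ε| < ε₀ →
      (let L : Fin s := ⟨s - 1, by omega⟩
      let Γ' : ℝ := ∑ i, if i.val < s - 1 then α i else 0
      let ε' : ℝ := -ε * Γ' / α L
      let v : Fin s → ℝ := fun i => w i + (if i = L then ε' else ε)
      (∑ i, α i * v i = 0) ∧
      (∀ i, Real.sign (v i) = Real.sign (w i)) ∧
      (∑ i, α i * (v i) ^ 2 = (ε * (∑ i, α i) / α L) * (ε * Γ' - 2 * w L * α L)) ∧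
      (∑ i, α i * (v i) ^ 2 ≠ 0)) := by
  have hslt : s - 1 < s := by omega
  set L : Fin s := ⟨s - 1, hslt⟩ with hLdef
  set Γ' : ℝ := ∑ i, if i.val < s - 1 then α i else 0 with hΓ'def
  have hne : (univ : Finset (Fin s)).Nonempty := ⟨L, mem_univ L⟩
  set A : ℝ := univ.inf' hne (fun i => |w i|) with hAdef
  have hApos : 0 < A := by
    rw [hAdef, Finset.lt_inf'_iff]
    exact fun i _ => abs_pos.mpr (hw i)
  have hAle : ∀ i, A ≤ |w i| := fun i => Finset.inf'_le _ (mem_univ i)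
  have hαL : α L ≠ 0 := hα L
  have hwαL : w L * α L ≠ 0 := mul_ne_zero (hw L) hαL
  set c : ℝ := |Γ' / α L| with hcdef
  have hc : (0:ℝ) ≤ c := abs_nonneg _
  have hc1 : (0:ℝ) < 1 + c := by linarith
  have hG1 : (0:ℝ) < 1 + |Γ'| := by positivity
  refine ⟨min (A / (1 + c)) (2 * |w L * α L| / (1 + |Γ'|)), ?_, ?_⟩
  · apply lt_min
    · positivity
    · positivity
  intro ε hε hεlt L' G' e' v
  have hL' : L' = L := rfl
  have hG' : G' = Γ' := rfl
  have he' : e' = -ε * Γ' / α L := rfl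
  have hv : ∀ i, v i = w i + (if i = L then e' else ε) := fun _ => rfl
  -- bounds on ε
  have hε1 : |ε| < A / (1 + c) := lt_of_lt_of_le hεlt (min_le_left _ _)
  have hε2 : |ε| < 2 * |w L * α L| / (1 + |Γ'|) := lt_of_lt_of_le hεlt (min_le_right _ _)
  have hεA : |ε| < A := lt_of_lt_of_le hε1 (div_le_self hApos.le (by linarith))
  have hεc : |ε| * (1 + c) < A := by
    calc |ε| * (1 + c) < (A / (1 + c)) * (1 + c) := by
          exact mul_lt_mul_of_pos_right hε1 hc1
      _ = A := div_mul_cancel₀ _ (ne_of_gt hc1)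
  have he'A : |e'| < A := by
    have : |e'| = |ε| * c := by
      rw [he', hcdef]
      rw [show -ε * Γ' / α L = ε * (Γ' / α L) * (-1) by ring]
      rw [abs_mul, abs_mul, abs_neg, abs_one, mul_one]
    rw [this]
    calc |ε| * c ≤ |ε| * (1 + c) := by nlinarith [abs_nonneg ε]
      _ < A := hεc
  have hεG : |ε * Γ'| < |2 * w L * α L| := by
    have h1 : |ε| * (1 + |Γ'|) < 2 * |w L * α L| := by
      calc |ε| * (1 + |Γ'|) < (2 * |w L * α L| / (1 + |Γ'|)) * (1 + |Γ'|) :=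
            mul_lt_mul_of_pos_right hε2 hG1
        _ = 2 * |w L * α L| := div_mul_cancel₀ _ (ne_of_gt hG1)
    have h2 : |2 * w L * α L| = 2 * |w L * α L| := by
      rw [mul_assoc, abs_mul, abs_two]
    rw [abs_mul, h2]
    nlinarith [abs_nonneg ε, abs_nonneg Γ']
  -- decomposition of sums
  have hsplit : ∀ f : Fin s → ℝ, ∑ i, f i = (∑ i ∈ univ.erase L, f i) + f L :=
    fun f => (Finset.sum_erase_add univ f (mem_univ L)).symm
  have hiff : ∀ i : Fin s, i.val < s - 1 ↔ i ≠ L := by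
    intro i
    constructor
    · intro h hc2
      rw [hc2] at h
      simp only [hLdef] at h
      omega
    · intro h
      have h1 : i.val < s := i.isLt
      have h2 : i.val ≠ s - 1 := fun hc2 => h (Fin.ext hc2)
      omega
  have hΓ'eq : Γ' = ∑ i ∈ univ.erase L, α i := by
    rw [hΓ'def, ← Finset.sum_filter]
    congr 1
    ext i
    simp [hiff i]
  have hΓsum : ∑ i, α i = Γ' + α L := by rw [hsplit α, hΓ'eq]
  have h1 : ∑ i ∈ univ.erase L, α i * w i = -(α L * w L) := by
    have := hsplit (fun i => α i * w i)
    rw [horth] at this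
    linarith
  have h2 : ∑ i ∈ univ.erase L, α i * w i ^ 2 = -(α L * w L ^ 2) := by
    have := hsplit (fun i => α i * w i ^ 2)
    rw [horth2] at this
    linarith
  have hvE : ∀ i ∈ univ.erase L, α i * v i = α i * w i + α i * ε := by
    intro i hi
    rw [hv i, if_neg (mem_erase.mp hi).1]
    ring
  have hvL : v L = w L + e' := by rw [hv L, if_pos rfl]
  have hvE2 : ∀ i ∈ univ.erase L,
      α i * v i ^ 2 = α i * w i ^ 2 + (2 * ε) * (α i * w i) + (ε ^ 2) * α i := by
    intro i hi
    rw [hv i, if_neg (mem_erase.mp hi).1]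
    ring
  have goal1 : ∑ i, α i * v i = 0 := by
    rw [hsplit (fun i => α i * v i), Finset.sum_congr rfl hvE, Finset.sum_add_distrib,
      ← Finset.sum_mul, ← hΓ'eq, h1, hvL, he']
    field_simp
    ring
  have goal2 : ∑ i, α i * v i ^ 2 =
      (ε * (∑ i, α i) / α L) * (ε * Γ' - 2 * w L * α L) := by
    rw [hsplit (fun i => α i * v i ^ 2), Finset.sum_congr rfl hvE2,
      Finset.sum_add_distrib, Finset.sum_add_distrib, ← Finset.mul_sum, ← Finset.mul_sum,
      ← hΓ'eq, h1, h2, hvL, he', hΓsum]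
    field_simp
    ring
  have hfac : ε * Γ' - 2 * w L * α L ≠ 0 := by
    refine sub_ne_zero_of_ne ?_
    intro h
    rw [h] at hεG
    exact lt_irrefl _ hεG
  have goal4 : ∑ i, α i * v i ^ 2 ≠ 0 := by
    rw [goal2]
    exact mul_ne_zero (div_ne_zero (mul_ne_zero hε hΓ) hαL) hfac
  have hsign : ∀ i, Real.sign (v i) = Real.sign (w i) := by
    intro i
    by_cases hi : i = L
    · rw [hi, hvL]
      exact sign_add_of_abs_lt' (hw L) (lt_of_lt_of_le he'A (hAle L))
    · rw [hv i, if_neg hi]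
      exact sign_add_of_abs_lt' (hw i) (lt_of_lt_of_le hεA (hAle i))
  refine ⟨goal1, hsign, ?_, goal4⟩
  rw [hL', hG']
  exact goal2
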